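/- arXiv:1909.13526 — 2 statements merged into one kernel-verified Lean document; each statement's English description precedes it below -/
import Mathlib

section
/- Let n > 0 and let d_1, ..., d_n be nonzero integers. Define the binary operation l * m = 2m - l on the integers. Then the closure of the set {0, d_1, ..., d_n} under this operation equals dℤ = {0, ±d, ±2d, ...}, where d = gcd(d_1, ..., d_n). -/
/-- The closure of a set `S ⊆ ℤ` under the dihedral quandle operation `l * m = 2 * m - l`:
the smallest subset of `ℤ` containing `S` and closed under the operation. -/
def dihClosure (S : Set ℤ) : Set ℤ :=
  ⋂₀ {T : Set ℤ | S ⊆ T ∧ ∀ a ∈ T, ∀ b ∈ T, 2 * b - a ∈ T}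

/-!
The closure is contained in `gℤ`, which contains the generators and is closed under
`l * m = 2m - l`. Conversely, the translations preserving the closure form a subgroup of `ℤ`;
it contains `2dᵢ` for every generator, as `c + 2dᵢ = (c * 0) * dᵢ`, hence `2g` by Bézout.
So the closure is a union of cosets of `2gℤ` containing `0`, and also `g`: not all `dᵢ / g`
are even, and an odd one gives `dᵢ ≡ g mod 2g`.
-/

section DihClosure

variable {S T : Set ℤ} {a b c s t x : ℤ}

theorem subset_dihClosure : S ⊆ dihClosure S :=
  fun _ hx => Set.mem_sInter.2 fun _ hT => hT.1 hx

theorem two_mul_sub_mem_dihClosure (ha : a ∈ dihClosure S) (hb : b ∈ dihClosure S) :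
    2 * b - a ∈ dihClosure S :=
  Set.mem_sInter.2 fun T hT => hT.2 a (Set.mem_sInter.1 ha T hT) b (Set.mem_sInter.1 hb T hT)

theorem dihClosure_subset (hST : S ⊆ T) (hT : ∀ a ∈ T, ∀ b ∈ T, 2 * b - a ∈ T) :
    dihClosure S ⊆ T :=
  Set.sInter_subset_of_mem ⟨hST, hT⟩

theorem dihClosure_subset_setOf_dvd {g : ℤ} (hS : ∀ s ∈ S, g ∣ s) :
    dihClosure S ⊆ {x | g ∣ x} :=
  dihClosure_subset hS fun _ ha _ hb => dvd_sub (dvd_mul_of_dvd_right hb 2) ha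

def dihTranslations (S : Set ℤ) : AddSubgroup ℤ where
  carrier := {z | ∀ c ∈ dihClosure S, c + z ∈ dihClosure S}
  zero_mem' := by simp
  add_mem' := fun hz hw c hc => by simpa only [add_assoc] using hw _ (hz c hc)
  neg_mem' := fun {z} hz c hc => by
    simpa only [show 2 * c - (c + z) = c + -z by ring] using
      two_mul_sub_mem_dihClosure (hz c hc) hc

theorem mem_dihTranslations :
    t ∈ dihTranslations S ↔ ∀ c ∈ dihClosure S, c + t ∈ dihClosure S :=
  Iff.rfl

theorem two_mul_mem_dihTranslations (h0 : 0 ∈ dihClosure S) (hs : s ∈ dihClosure S) :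
    2 * s ∈ dihTranslations S := fun c hc => by
  have hneg : -c ∈ dihClosure S := by simpa using two_mul_sub_mem_dihClosure hc h0
  simpa only [show 2 * s - -c = c + 2 * s by ring] using two_mul_sub_mem_dihClosure hneg hs

theorem two_mul_gcd_mem_dihTranslations {ι : Type*} (s : Finset ι) (f : ι → ℤ)
    (h0 : 0 ∈ dihClosure S) (hf : ∀ i ∈ s, f i ∈ dihClosure S) :
    2 * s.gcd f ∈ dihTranslations S := by
  obtain ⟨u, hu⟩ := Finset.gcd_eq_sum_mul s f
  rw [hu, Finset.mul_sum]
  refine AddSubgroup.sum_mem _ fun i hi => ?_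
  rw [show 2 * (f i * u i) = u i • (2 * f i) by rw [smul_eq_mul]; ring]
  exact AddSubgroup.zsmul_mem _ (two_mul_mem_dihTranslations h0 (hf i hi)) _

theorem mem_dihClosure_of_dvd_sub (ht : t ∈ dihTranslations S) (hc : c ∈ dihClosure S)
    (hx : t ∣ x - c) : x ∈ dihClosure S := by
  obtain ⟨m, hm⟩ := hx
  have := (mem_dihTranslations.1 (AddSubgroup.zsmul_mem _ ht m)) c hc
  rwa [smul_eq_mul, mul_comm, ← hm, add_sub_cancel] at this

end DihClosure

theorem Int.two_mul_dvd_sub_of_dvd_of_not_two_mul_dvd {g a : ℤ} (hg : g ∣ a)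
    (h : ¬ 2 * g ∣ a) : 2 * g ∣ a - g := by
  obtain ⟨e, rfl⟩ := hg
  have he : ¬ Even e := fun ⟨k, hk⟩ => h ⟨k, by rw [hk]; ring⟩
  obtain ⟨k, hk⟩ := Int.not_even_iff_odd.1 he
  exact ⟨k, by rw [hk]; ring⟩

theorem Finset.exists_not_two_mul_gcd_dvd {ι : Type*} {s : Finset ι} {f : ι → ℤ}
    (h : s.gcd f ≠ 0) : ∃ i ∈ s, ¬ 2 * s.gcd f ∣ f i := by
  by_contra! hall
  have h21 : (2 : ℤ) ∣ 1 :=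
    (mul_dvd_mul_iff_right h).1 (by simpa using Finset.dvd_gcd fun i hi => hall i hi)
  norm_num at h21

/-- For nonzero integers `d 0, …, d (n-1)` (`n > 0`), the closure of `{0, d 0, …, d (n-1)}`
under the operation `l * m = 2 * m - l` equals `dℤ`, where `d = gcd (d 0, …, d (n-1))`. -/
theorem dihClosure_eq_gcd_multiples (n : ℕ) (hn : 0 < n) (d : Fin n → ℤ)
    (hd : ∀ i, d i ≠ 0) :
    dihClosure ({0} ∪ Set.range d) = {x : ℤ | Finset.univ.gcd d ∣ x} := by
  set g := Finset.univ.gcd d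
  have h0 : 0 ∈ dihClosure ({0} ∪ Set.range d) := subset_dihClosure (Or.inl rfl)
  have hdC : ∀ i, d i ∈ dihClosure ({0} ∪ Set.range d) :=
    fun i => subset_dihClosure (Or.inr ⟨i, rfl⟩)
  have hg0 : g ≠ 0 := fun h => hd ⟨0, hn⟩ (Finset.gcd_eq_zero_iff.1 h _ (Finset.mem_univ _))
  have htrans := two_mul_gcd_mem_dihTranslations Finset.univ d h0 fun i _ => hdC i
  have hgC : g ∈ dihClosure ({0} ∪ Set.range d) := by
    obtain ⟨i, -, hi⟩ := Finset.exists_not_two_mul_gcd_dvd hg0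
    exact mem_dihClosure_of_dvd_sub htrans (hdC i) <| dvd_sub_comm.1 <|
      Int.two_mul_dvd_sub_of_dvd_of_not_two_mul_dvd (Finset.gcd_dvd (Finset.mem_univ i)) hi
  refine (dihClosure_subset_setOf_dvd ?_).antisymm fun x (hx : g ∣ x) => ?_
  · rintro s (rfl | ⟨i, rfl⟩)
    exacts [dvd_zero g, Finset.gcd_dvd (Finset.mem_univ i)]
  · by_cases h2 : 2 * g ∣ x
    · exact mem_dihClosure_of_dvd_sub htrans h0 (by simpa using h2)
    · exact mem_dihClosure_of_dvd_sub htrans hgC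
        (Int.two_mul_dvd_sub_of_dvd_of_not_two_mul_dvd hx h2)
end

section
/- Let ρ : G → SU(2) be a group homomorphism, let x, z ∈ G, and suppose ρ([G,G]) is abelian and x lies in the commutator subgroup [G,G]. If ρ(x) is a diagonal matrix, then ρ(z x z⁻¹) is also a diagonal matrix. -/
/-!
If `ρ x` is diagonal with distinct eigenvalues, its centralizer consists of diagonal matrices,
and `ρ (z * x * z⁻¹)` lies in it because both elements belong to `[G, G]`, whose image is abelian.
Otherwise `ρ x` is scalar, hence central, and `ρ (z * x * z⁻¹) = ρ x`.
-/

theorem Fin.injective_two_iff {α : Type*} {f : Fin 2 → α} :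
    Function.Injective f ↔ f 0 ≠ f 1 := by
  refine ⟨fun hf h => zero_ne_one (hf h), fun h i j hij => ?_⟩
  fin_cases i <;> fin_cases j <;> simp_all [eq_comm]

namespace Matrix

theorem IsDiag.of_commute_of_injective_diag {n R : Type*} [Fintype n] [DecidableEq n]
    [CommRing R] [NoZeroDivisors R] {A B : Matrix n n R} (hA : A.IsDiag)
    (hinj : Function.Injective A.diag) (hAB : Commute A B) : B.IsDiag := by
  intro i j hij
  have hentry : A i i * B i j = B i j * A j j := by
    have := congr_fun₂ hAB.eq i j
    rwa [← hA.diagonal_diag, diagonal_mul, mul_diagonal] at this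
  have hsub : B i j * (A i i - A j j) = 0 := by linear_combination hentry
  exact (mul_eq_zero.mp hsub).resolve_right (sub_ne_zero.mpr (hinj.ne hij))

theorem IsDiag.commute_of_apply_zero_eq_apply_one {R : Type*} [CommSemiring R]
    {A : Matrix (Fin 2) (Fin 2) R} (hA : A.IsDiag) (h : A 0 0 = A 1 1)
    (B : Matrix (Fin 2) (Fin 2) R) : Commute A B := by
  have hscalar : A = scalar (Fin 2) (A 0 0) := by
    rw [← hA.diagonal_diag, scalar_apply]
    congr 1
    ext i
    fin_cases i <;> simp [h]
  rw [hscalar]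
  exact scalar_commute _ (fun r => Commute.all _ r) B

end Matrix

theorem metabelian_conj_diagonal_general {G : Type*} [Group G]
    (ρ : G →* Matrix.unitaryGroup (Fin 2) ℂ)
    (hmet : ∀ a b : G, a ∈ commutator G → b ∈ commutator G → Commute (ρ a) (ρ b))
    (x z : G) (hx : x ∈ commutator G)
    (hdiag : ((ρ x : Matrix (Fin 2) (Fin 2) ℂ)).IsDiag) :
    ((ρ (z * x * z⁻¹) : Matrix (Fin 2) (Fin 2) ℂ)).IsDiag := by
  by_cases h : (ρ x : Matrix (Fin 2) (Fin 2) ℂ) 0 0 = (ρ x : Matrix (Fin 2) (Fin 2) ℂ) 1 1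
  · have hcomm : Commute (ρ z) (ρ x) :=
      Submonoid.commute_coe_coe.mp (hdiag.commute_of_apply_zero_eq_apply_one h _).symm
    rwa [map_mul, map_mul, map_inv, hcomm.mul_inv_cancel]
  · have hconj : z * x * z⁻¹ ∈ commutator G :=
      (Subgroup.commutator_normal ⊤ ⊤).conj_mem x hx z
    exact hdiag.of_commute_of_injective_diag (Fin.injective_two_iff.mpr h)
      (Submonoid.commute_coe_coe.mpr (hmet x _ hx hconj))

/-- Let `ρ : G → SU(2)` be a homomorphism (realized as a homomorphism into the unitary group
of `2 × 2` complex matrices, with all values of determinant `1`), suppose `ρ` is metabelian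
(the image of the commutator subgroup is abelian), and let `x ∈ [G, G]`.
If `ρ x` is a diagonal matrix, then so is `ρ (z * x * z⁻¹)` for any `z ∈ G`. -/
theorem metabelian_conj_diagonal {G : Type*} [Group G]
    (ρ : G →* Matrix.unitaryGroup (Fin 2) ℂ)
    (hdet : ∀ g : G, ((ρ g : Matrix (Fin 2) (Fin 2) ℂ)).det = 1)
    (hmet : ∀ a b : G, a ∈ commutator G → b ∈ commutator G → Commute (ρ a) (ρ b))
    (x z : G) (hx : x ∈ commutator G)
    (hdiag : ((ρ x : Matrix (Fin 2) (Fin 2) ℂ)).IsDiag) :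
    ((ρ (z * x * z⁻¹) : Matrix (Fin 2) (Fin 2) ℂ)).IsDiag :=
  metabelian_conj_diagonal_general ρ hmet x z hx hdiag
end
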